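/- arXiv:1502.03695 — 7 statements merged into one kernel-verified Lean document; each statement's English description precedes it below -/
import Mathlib

section
/- Let G be a graph and let {x,y} be an even pair of G (i.e., x and y are non-adjacent and every induced path between x and y has an even number of edges). Given a proper coloring c of the contraction G/xy (obtained by deleting x,y and adding a new vertex adjacent to all vertices adjacent to x or y), the coloring of G that keeps c on V(G)\{x,y} and assigns to both x and y the color of the contracted vertex is a proper coloring of G. In particular χ(G) ≤ χ(G/xy). -/
variable {V : Type*} [DecidableEq V]

def IsInducedPath (G : SimpleGraph V) {u v : V} (p : G.Walk u v) : Prop :=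
  p.IsPath ∧ ∀ a b : V, a ∈ p.support → b ∈ p.support → G.Adj a b → s(a, b) ∈ p.edges

def EvenPair (G : SimpleGraph V) (x y : V) : Prop :=
  x ≠ y ∧ ¬ G.Adj x y ∧ ∀ p : G.Walk x y, IsInducedPath G p → Even p.length

/-- Auxiliary asymmetric adjacency for the contraction `G/xy`: the vertex `x`
plays the role of the contracted vertex, and `y` is deleted. -/
def contractAdjAux (G : SimpleGraph V) (x y u v : V) : Prop :=
  if u = x then (G.Adj x v ∨ G.Adj y v) else G.Adj u v

/-- The contraction `G/xy` of the (nonadjacent) pair `{x, y}`: the vertex set is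
`V \ {y}`, the vertex `x` represents the contracted vertex and is adjacent to all
vertices adjacent in `G` to `x` or to `y`; edges not involving `x` are as in `G`. -/
def contractPair (G : SimpleGraph V) (x y : V) : SimpleGraph {v : V // v ≠ y} where
  Adj a b := a ≠ b ∧ (contractAdjAux G x y a.1 b.1 ∨ contractAdjAux G x y b.1 a.1)
  symm := by
    constructor
    intro a b ⟨h1, h2⟩
    exact ⟨h1.symm, h2.symm⟩
  loopless := by
    constructor
    intro a ⟨h1, _⟩
    exact h1 rfl

/-- The coloring of `G` obtained from a coloring `c` of `G/xy` by giving `x` and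
`y` the color of the contracted vertex. -/
def extendColoring (G : SimpleGraph V) (x y : V) (hxy : x ≠ y)
    (c : {v : V // v ≠ y} → ℕ) : V → ℕ :=
  fun v => if h : v = y then c ⟨x, hxy⟩ else c ⟨v, h⟩


lemma extend_proper {α : Type*} (G : SimpleGraph V) (x y : V) (hxy : x ≠ y)
    (hnadj : ¬ G.Adj x y) (c : {v : V // v ≠ y} → α)
    (hc : ∀ a b, (contractPair G x y).Adj a b → c a ≠ c b) :
    ∀ a b : V, G.Adj a b →
      (fun v => if h : v = y then c ⟨x, hxy⟩ else c ⟨v, h⟩) a ≠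
      (fun v => if h : v = y then c ⟨x, hxy⟩ else c ⟨v, h⟩) b := by
  have aux : ∀ a b : V, G.Adj a b → contractAdjAux G x y a b := by
    intro a b hab
    unfold contractAdjAux
    split_ifs with h
    · subst h; exact Or.inl hab
    · exact hab
  intro a b hab
  simp only
  by_cases ha : a = y <;> by_cases hb : b = y
  · rw [ha, hb] at hab; exact absurd hab (G.loopless.irrefl y)
  · subst ha
    rw [dif_pos rfl, dif_neg hb]
    have hbx : x ≠ b := by rintro rfl; exact hnadj hab.symm
    refine hc ⟨x, hxy⟩ ⟨b, hb⟩ ⟨?_, Or.inl ?_⟩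
    · simp [Subtype.ext_iff, hbx]
    · unfold contractAdjAux
      rw [if_pos rfl]
      exact Or.inr hab
  · subst hb
    rw [dif_neg ha, dif_pos rfl]
    have hax : x ≠ a := by rintro rfl; exact hnadj hab
    refine (hc ⟨x, hxy⟩ ⟨a, ha⟩ ⟨?_, Or.inl ?_⟩).symm
    · simp [Subtype.ext_iff, hax]
    · unfold contractAdjAux
      rw [if_pos rfl]
      exact Or.inr hab.symm
  · rw [dif_neg ha, dif_neg hb]
    refine hc ⟨a, ha⟩ ⟨b, hb⟩ ⟨?_, Or.inl (aux a b hab)⟩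
    simp [Subtype.ext_iff, hab.ne]

theorem evenPair_contraction_coloring [Fintype V] (G : SimpleGraph V) (x y : V)
    (hep : EvenPair G x y) (c : {v : V // v ≠ y} → ℕ)
    (hc : ∀ a b, (contractPair G x y).Adj a b → c a ≠ c b) :
    (∀ a b : V, G.Adj a b →
      extendColoring G x y hep.1 c a ≠ extendColoring G x y hep.1 c b) ∧
    G.chromaticNumber ≤ (contractPair G x y).chromaticNumber := by
  obtain ⟨hxy, hnadj, _⟩ := hep
  constructor
  · exact extend_proper G x y hxy hnadj c hc
  · apply SimpleGraph.chromaticNumber_le_of_forall_imp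
    intro n ⟨c'⟩
    exact ⟨SimpleGraph.Coloring.mk
      (fun v => if h : v = y then c' ⟨x, hxy⟩ else c' ⟨v, h⟩)
      (fun {a b} hab => extend_proper G x y hxy hnadj c'
        (fun a b h => c'.valid h) a b hab)⟩
end

section
/- Let G be a graph containing a prism formed by two vertex-disjoint triangles {a1,a2,a3} and {b1,b2,b3} joined by three vertex-disjoint induced paths P1, P2, P3 (Pi from ai to bi), with no edges between the paths other than those of the two triangles. If two of the paths P1, P2, P3 have lengths of different parities, then G contains an odd hole. Consequently, in a graph with no odd hole, the three paths of any induced prism all have the same parity. -/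
variable {V : Type*}

def IsInducedCycle (G : SimpleGraph V) {u : V} (p : G.Walk u u) : Prop :=
  p.IsCycle ∧ ∀ a b : V, a ∈ p.support → b ∈ p.support → G.Adj a b → s(a, b) ∈ p.edges

def HasOddHole (G : SimpleGraph V) : Prop :=
  ∃ (u : V) (p : G.Walk u u), IsInducedCycle G p ∧ Odd p.length ∧ 4 ≤ p.length

/-- In a prism (two vertex-disjoint triangles `{a 0, a 1, a 2}` and
`{b 0, b 1, b 2}` joined by three vertex-disjoint induced paths `P i` from `a i`
to `b i`, with no cross edges except the triangle edges), if two of the paths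
have lengths of different parities then `G` has an odd hole; consequently, if
`G` has no odd hole, then all three paths have the same parity. -/
theorem prism_paths_same_parity (G : SimpleGraph V) (a b : Fin 3 → V)
    (P : ∀ i : Fin 3, G.Walk (a i) (b i))
    (hind : ∀ i, IsInducedPath G (P i))
    (htriA : ∀ i j, i ≠ j → G.Adj (a i) (a j))
    (htriB : ∀ i j, i ≠ j → G.Adj (b i) (b j))
    (hdisjAB : ∀ i j, a i ≠ b j)
    (hdisj : ∀ i j, i ≠ j → ∀ u : V, u ∈ (P i).support → u ∉ (P j).support)
    (hcross : ∀ i j, i ≠ j → ∀ u ∈ (P i).support, ∀ v ∈ (P j).support,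
        G.Adj u v → (u = a i ∧ v = a j) ∨ (u = b i ∧ v = b j)) :
    ((∃ i j : Fin 3, Odd ((P i).length + (P j).length)) → HasOddHole G) ∧
    (¬ HasOddHole G → ∀ i j : Fin 3, (Even (P i).length ↔ Even (P j).length)) := by
  have key : ∀ i j : Fin 3, Odd ((P i).length + (P j).length) → HasOddHole G := by
    intro i j hodd
    have hij : i ≠ j := by
      rintro rfl
      obtain ⟨k, hk⟩ := hodd; omega
    -- the walk R : b j → a i
    have hRadj : G.Adj (b j) (b i) := htriB j i hij.symm
    set R : G.Walk (b j) (a i) := SimpleGraph.Walk.cons hRadj (P i).reverse with hR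
    set Q : G.Walk (a j) (a i) := (P j).append R with hQ
    have hQsupp : Q.support = (P j).support ++ ((P i).support).reverse := by
      rw [hQ, SimpleGraph.Walk.support_append, hR, SimpleGraph.Walk.support_cons,
        List.tail_cons, SimpleGraph.Walk.support_reverse]
    have hQmem : ∀ u : V, u ∈ Q.support ↔ u ∈ (P j).support ∨ u ∈ (P i).support := by
      intro u; rw [hQsupp]; simp
    have hQpath : Q.IsPath := by
      rw [SimpleGraph.Walk.isPath_def, hQsupp]
      refine List.Nodup.append ((hind j).1.support_nodup ) ?_ ?_
      · exact List.nodup_reverse.mpr (hind i).1.support_nodup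
      · intro u hu hu'
        exact hdisj j i hij.symm u hu (List.mem_reverse.mp hu')
    have hQedges : ∀ e, e ∈ Q.edges ↔
        e ∈ (P j).edges ∨ e = s(b j, b i) ∨ e ∈ (P i).edges := by
      intro e
      rw [hQ, SimpleGraph.Walk.edges_append, hR, SimpleGraph.Walk.edges_cons,
        SimpleGraph.Walk.edges_reverse]
      simp [or_assoc]
    have hnotQ : s(a i, a j) ∉ Q.edges := by
      rw [hQedges]
      push_neg
      refine ⟨?_, ?_, ?_⟩
      · intro h
        exact hdisj i j hij (a i) (P i).start_mem_support
          (SimpleGraph.Walk.fst_mem_support_of_mem_edges _ h)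
      · intro h
        rw [Sym2.eq_iff] at h
        rcases h with ⟨h1, _⟩ | ⟨h1, _⟩ <;> exact hdisjAB i _ h1
      · intro h
        exact hdisj j i hij.symm (a j) (P j).start_mem_support
          (SimpleGraph.Walk.snd_mem_support_of_mem_edges _ h)
    set C : G.Walk (a i) (a i) := SimpleGraph.Walk.cons (htriA i j hij) Q with hC
    have hCcycle : C.IsCycle :=
      (SimpleGraph.Walk.cons_isCycle_iff Q (htriA i j hij)).mpr ⟨hQpath, hnotQ⟩
    have hCmem : ∀ u : V, u ∈ C.support ↔ u ∈ (P i).support ∨ u ∈ (P j).support := by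
      intro u
      rw [hC, SimpleGraph.Walk.support_cons]
      constructor
      · intro h
        rcases List.mem_cons.mp h with h | h
        · exact Or.inl (h ▸ (P i).start_mem_support)
        · exact ((hQmem u).mp h).symm
      · intro h
        exact List.mem_cons.mpr (Or.inr ((hQmem u).mpr h.symm))
    have hCedges : ∀ e, e ∈ C.edges ↔ e = s(a i, a j) ∨ e ∈ (P j).edges ∨
        e = s(b j, b i) ∨ e ∈ (P i).edges := by
      intro e
      rw [hC, SimpleGraph.Walk.edges_cons, List.mem_cons, hQedges]
    have hCind : IsInducedCycle G C := by
      refine ⟨hCcycle, ?_⟩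
      intro u v hu hv huv
      rw [hCmem] at hu hv
      rw [hCedges]
      rcases hu with hu | hu <;> rcases hv with hv | hv
      · exact Or.inr (Or.inr (Or.inr ((hind i).2 u v hu hv huv)))
      · rcases hcross i j hij u hu v hv huv with ⟨rfl, rfl⟩ | ⟨rfl, rfl⟩
        · exact Or.inl rfl
        · exact Or.inr (Or.inr (Or.inl (Sym2.eq_swap)))
      · rcases hcross j i hij.symm u hu v hv huv with ⟨rfl, rfl⟩ | ⟨rfl, rfl⟩
        · exact Or.inl Sym2.eq_swap
        · exact Or.inr (Or.inr (Or.inl rfl))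
      · exact Or.inr (Or.inl ((hind j).2 u v hu hv huv))
    have hClen : C.length = (P i).length + (P j).length + 2 := by
      rw [hC, SimpleGraph.Walk.length_cons, hQ, SimpleGraph.Walk.length_append, hR,
        SimpleGraph.Walk.length_cons, SimpleGraph.Walk.length_reverse]
      ring
    have hlenpos : ∀ k : Fin 3, 1 ≤ (P k).length := by
      intro k
      by_contra h
      push_neg at h
      exact hdisjAB k k (SimpleGraph.Walk.eq_of_length_eq_zero (Nat.lt_one_iff.mp h))
    refine ⟨a i, C, hCind, ?_, ?_⟩
    · rw [hClen]
      obtain ⟨k, hk⟩ := hodd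
      exact ⟨k + 1, by omega⟩
    · rw [hClen]
      have := hlenpos i
      have := hlenpos j
      omega
  constructor
  · rintro ⟨i, j, h⟩; exact key i j h
  · intro hno i j
    rw [← Nat.even_add]
    by_contra h
    rw [Nat.not_even_iff_odd] at h
    exact hno (key i j h)
end

section
/- Let G be a square-free graph, let A1, A2, A3 be pairwise disjoint nonempty vertex sets that are pairwise complete to each other. Then at least two of the three sets A1, A2, A3 are cliques. -/
variable {V : Type*}

def SquareFree' (G : SimpleGraph V) : Prop :=
  ¬ ∃ a b c d : V, G.Adj a b ∧ G.Adj b c ∧ G.Adj c d ∧ G.Adj d a ∧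
      ¬ G.Adj a c ∧ ¬ G.Adj b d ∧ a ≠ c ∧ b ≠ d

/-- In a square-free graph, if `A 0, A 1, A 2` are pairwise disjoint nonempty
sets that are pairwise complete to each other, then at least two of them are
cliques. -/
theorem squareFree_three_complete_two_cliques (G : SimpleGraph V)
    (hsf : SquareFree' G) (A : Fin 3 → Set V)
    (hne : ∀ i, (A i).Nonempty)
    (hdisj : ∀ i j, i ≠ j → Disjoint (A i) (A j))
    (hcomp : ∀ i j, i ≠ j → ∀ u ∈ A i, ∀ v ∈ A j, G.Adj u v) :
    ∃ i j : Fin 3, i ≠ j ∧ G.IsClique (A i) ∧ G.IsClique (A j) := by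
  have key : ∀ i j : Fin 3, i ≠ j → G.IsClique (A i) ∨ G.IsClique (A j) := by
    intro i j hij
    by_contra h
    push_neg at h
    obtain ⟨hi, hj⟩ := h
    rw [SimpleGraph.isClique_iff, Set.Pairwise] at hi hj
    push_neg at hi hj
    obtain ⟨a, ha, c, hc, hac, hnac⟩ := hi
    obtain ⟨b, hb, d, hd, hbd, hnbd⟩ := hj
    exact hsf ⟨a, b, c, d, hcomp i j hij a ha b hb, hcomp j i hij.symm b hb c hc,
      hcomp i j hij c hc d hd, hcomp j i hij.symm d hd a ha, hnac, hnbd, hac, hbd⟩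
  rcases key 0 1 (by decide) with h01 | h01
  · rcases key 1 2 (by decide) with h | h
    · exact ⟨0, 1, by decide, h01, h⟩
    · exact ⟨0, 2, by decide, h01, h⟩
  · rcases key 0 2 (by decide) with h | h
    · exact ⟨0, 1, by decide, h, h01⟩
    · exact ⟨1, 2, by decide, h01, h⟩
end

section
/- Let G be a square-free graph, let A1, A2 be disjoint nonempty vertex sets with A1 complete to A2, and let M be a set of vertices disjoint from A1 ∪ A2 such that every vertex of M is complete to at least one of A1, A2. If M is a clique, then M is complete to at least one of A1, A2. -/
variable {V : Type*}

/-- In a square-free graph, let `A1, A2` be disjoint nonempty sets with `A1`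
complete to `A2`, and `M` a clique disjoint from `A1 ∪ A2` each of whose
vertices is complete to `A1` or to `A2`.  Then `M` is complete to `A1` or to
`A2`. -/
theorem squareFree_clique_complete (G : SimpleGraph V) (hsf : SquareFree' G)
    (A1 A2 M : Set V)
    (hne1 : A1.Nonempty) (hne2 : A2.Nonempty)
    (hdisj : Disjoint A1 A2)
    (hMdisj : Disjoint M (A1 ∪ A2))
    (hcomp : ∀ u ∈ A1, ∀ v ∈ A2, G.Adj u v)
    (hM : ∀ m ∈ M, (∀ u ∈ A1, G.Adj m u) ∨ (∀ u ∈ A2, G.Adj m u))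
    (hMclique : G.IsClique M) :
    (∀ m ∈ M, ∀ u ∈ A1, G.Adj m u) ∨ (∀ m ∈ M, ∀ u ∈ A2, G.Adj m u) := by
  by_contra hcon
  push_neg at hcon
  obtain ⟨⟨m1, hm1M, u1, hu1, hnadj1⟩, m2, hm2M, u2, hu2, hnadj2⟩ := hcon
  have hm1A2 : ∀ u ∈ A2, G.Adj m1 u := by
    rcases hM m1 hm1M with h | h
    · exact absurd (h u1 hu1) hnadj1
    · exact h
  have hm2A1 : ∀ u ∈ A1, G.Adj m2 u := by
    rcases hM m2 hm2M with h | h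
    · exact h
    · exact absurd (h u2 hu2) hnadj2
  have hne : m1 ≠ m2 := by
    rintro rfl; exact hnadj1 (hm2A1 u1 hu1)
  have hadj12 : G.Adj m1 m2 := hMclique hm1M hm2M hne
  refine hsf ⟨m1, m2, u1, u2, hadj12, hm2A1 u1 hu1, hcomp u1 hu1 u2 hu2,
    (hm1A2 u2 hu2).symm, hnadj1, hnadj2, ?_, ?_⟩
  · rintro rfl
    exact absurd hu1 (Set.disjoint_left.mp hMdisj hm1M ∘ Set.mem_union_left A2)
  · rintro rfl
    exact absurd hu2 (Set.disjoint_left.mp hMdisj hm2M ∘ Set.mem_union_right A1)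
end

section
/- Let A and B be finite nonempty sets. Suppose for each b ∈ B there is a strict partial order <_b on A, and for each a ∈ A there is a strict partial order <_a on B, satisfying the twist condition: for all a,u ∈ A and b,v ∈ B, if a <_b u and b <_u v then a <_v u. Then there exist a ∈ A and b ∈ B such that a is a maximal element of (A, <_b) and b is a maximal element of (B, <_a). -/
/-- In a finite type, for any transitive irreflexive relation, above every
element there is a maximal element. -/
lemma exists_max_above {α : Type*} [Finite α] (r : α → α → Prop)
    (irr : ∀ x, ¬ r x x) (tr : ∀ x y z, r x y → r y z → r x z) (a : α) :
    ∃ m, (m = a ∨ r a m) ∧ ∀ u, ¬ r m u := by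
  let s : α → α → Prop := fun x y => r y x
  haveI : IsTrans α s := ⟨fun x y z hxy hyz => tr z y x hyz hxy⟩
  haveI : IsIrrefl α s := ⟨fun x => irr x⟩
  have wf : WellFounded s := Finite.wellFounded_of_trans_of_irrefl s
  obtain ⟨m, hm, hmin⟩ := wf.has_min {x | x = a ∨ r a x} ⟨a, Or.inl rfl⟩
  refine ⟨m, ?_, ?_⟩
  · rcases hm with h | h
    · exact Or.inl h
    · exact Or.inr h
  · intro u hu
    have hu' : u ∈ {x | x = a ∨ r a x} := by
      rcases hm with rfl | h
      · exact Or.inr hu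
      · exact Or.inr (tr a m u h hu)
    exact hmin u hu' hu

/-- Given finite nonempty sets `A`, `B`, a family of strict partial orders
`<_b` on `A` (for `b ∈ B`) and `<_a` on `B` (for `a ∈ A`) satisfying the twist
condition (`a <_b u` and `b <_u v` imply `a <_v u`), there exist `a ∈ A` and
`b ∈ B` with `a` maximal for `<_b` and `b` maximal for `<_a`. -/
theorem twist_orders_mutual_max {A B : Type*} [Fintype A] [Fintype B]
    [Nonempty A] [Nonempty B]
    (ltA : B → A → A → Prop) (ltB : A → B → B → Prop)
    (hA_irrefl : ∀ b a, ¬ ltA b a a)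
    (hA_trans : ∀ b, ∀ x y z : A, ltA b x y → ltA b y z → ltA b x z)
    (hB_irrefl : ∀ a b, ¬ ltB a b b)
    (hB_trans : ∀ a, ∀ x y z : B, ltB a x y → ltB a y z → ltB a x z)
    (htwist : ∀ (a u : A) (b v : B), ltA b a u → ltB u b v → ltA v a u) :
    ∃ (a : A) (b : B), (∀ u : A, ¬ ltA b a u) ∧ (∀ v : B, ¬ ltB a b v) := by
  by_contra hcon
  push_neg at hcon
  -- hcon : ∀ a b, (∀ u, ¬ ltA b a u) → ∃ v, ltB a b v
  obtain ⟨b0⟩ := ‹Nonempty B›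
  obtain ⟨a0⟩ := ‹Nonempty A›
  obtain ⟨a1, _, ha1⟩ := exists_max_above (ltA b0) (hA_irrefl b0) (hA_trans b0) a0
  -- pairs (a, b) with a maximal for <_b
  let P := {p : A × B // ∀ u, ¬ ltA p.2 p.1 u}
  have step : ∀ p : P, ∃ q : P, ltB p.1.1 p.1.2 q.1.2 ∧ ltA q.1.2 p.1.1 q.1.1 := by
    rintro ⟨⟨a, b⟩, hmax⟩
    obtain ⟨v, hv⟩ := hcon a b hmax
    obtain ⟨b', hb'ab, hb'max⟩ :=
      exists_max_above (ltB a) (hB_irrefl a) (hB_trans a) b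
    have hbb' : ltB a b b' := by
      rcases hb'ab with rfl | h
      · exact absurd hv (hb'max v)
      · exact h
    have hex : ∃ u, ltA b' a u := by
      by_contra h
      push_neg at h
      obtain ⟨w, hw⟩ := hcon a b' h
      exact hb'max w hw
    obtain ⟨u, hu⟩ := hex
    obtain ⟨a', ha'au, ha'max⟩ :=
      exists_max_above (ltA b') (hA_irrefl b') (hA_trans b') a
    have haa' : ltA b' a a' := by
      rcases ha'au with rfl | h
      · exact absurd hu (ha'max u)
      · exact h
    exact ⟨⟨(a', b'), ha'max⟩, hbb', haa'⟩
  choose g hg1 hg2 using step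
  let f : ℕ → P := fun n => g^[n] ⟨(a1, b0), ha1⟩
  have hfs : ∀ n, f (n + 1) = g (f n) := fun n =>
    Function.iterate_succ_apply' g n _
  have chain : ∀ n m, m < n → ltA (f n).1.2 (f m).1.1 (f n).1.1 := by
    intro n
    induction n with
    | zero => intro m hm; exact absurd hm (Nat.not_lt_zero m)
    | succ n ih =>
      intro m hm
      have h1 : ltB (f n).1.1 (f n).1.2 (f (n + 1)).1.2 := by
        rw [hfs]; exact hg1 (f n)
      have h2 : ltA (f (n + 1)).1.2 (f n).1.1 (f (n + 1)).1.1 := by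
        rw [hfs]; exact hg2 (f n)
      rcases Nat.lt_succ_iff_lt_or_eq.mp hm with hm' | rfl
      · exact hA_trans _ _ _ _ (htwist _ _ _ _ (ih m hm') h1) h2
      · exact h2
  obtain ⟨m, n, hne, hmn⟩ :=
    Finite.exists_ne_map_eq_of_infinite (fun n => (f n).1.1)
  have hmn' : (f m).1.1 = (f n).1.1 := hmn
  rcases Nat.lt_or_gt_of_ne hne with h | h
  · have := chain n m h
    rw [hmn'] at this
    exact hA_irrefl _ _ this
  · have := chain m n h
    rw [← hmn'] at this
    exact hA_irrefl _ _ this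
end

section
/- Let G be a graph with a proper m-coloring c, and let {x,y} be an even pair of G with c(x) = i and c(y) = j, i ≠ j. Then x and y lie in different connected components of the subgraph of G induced by the vertices colored i or j. Consequently, swapping colors i and j on the component containing x yields a proper m-coloring in which x and y have the same color. -/
variable {V : Type*}

-- parity lemma
lemma walk_alt (G : SimpleGraph V) (c : V → ℕ) (hc : ∀ u v : V, G.Adj u v → c u ≠ c v)
    (i j : ℕ) : ∀ {u v : V} (p : G.Walk u v),
    (∀ w ∈ p.support, c w = i ∨ c w = j) → (Even p.length ↔ c u = c v) := by
  intro u v p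
  induction p with
  | nil => simp
  | @cons u w v h q ih =>
    intro hsup
    have hu : c u = i ∨ c u = j := hsup u (by simp)
    have hw : c w = i ∨ c w = j := hsup w (by simp)
    have hv : c v = i ∨ c v = j := hsup v (SimpleGraph.Walk.end_mem_support _)
    have huw : c u ≠ c w := hc u w h
    have hq : Even q.length ↔ c w = c v := ih (fun z hz => hsup z (by simp [hz]))
    simp only [SimpleGraph.Walk.length_cons, Nat.even_add_one, hq]
    rcases hu with h1 | h1 <;> rcases hw with h2 | h2 <;> rcases hv with h3 | h3 <;>
      omega


open SimpleGraph Walk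

lemma length_one_edge {G : SimpleGraph V} {a b : V} (s : G.Walk a b) (h : s.length = 1) :
    s(a, b) ∈ s.edges := by
  cases s with
  | nil => simp at h
  | cons h' t =>
    have : t.length = 0 := by simpa using h
    have := SimpleGraph.Walk.eq_of_length_eq_zero this
    subst this
    simp

lemma shortcut {G : SimpleGraph V} {x y : V} (p : G.Walk x y) {a b : V}
    (ha : a ∈ p.support) (hb : b ∈ p.support) (hab : G.Adj a b)
    (hne : s(a, b) ∉ p.edges) :
    ∃ w : G.Walk x y, w.length < p.length ∧ ∀ v ∈ w.support, v ∈ p.support := by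
  classical
  set q := p.takeUntil a ha with hq
  set r := p.dropUntil a ha with hr
  have hspec : q.append r = p := p.take_spec ha
  have hlen : q.length + r.length = p.length := by
    rw [← hspec, SimpleGraph.Walk.length_append]
  have hb' : b ∈ q.support ∨ b ∈ r.support := by
    rw [← hspec] at hb
    rcases (SimpleGraph.Walk.mem_support_append_iff _ _).mp hb with h | h
    · exact Or.inl h
    · exact Or.inr h
  rcases hb' with hbq | hbr
  · -- b occurs in q (before a): walk = (q.takeUntil b) ++ cons hab.symm r
    set s2 := q.takeUntil b hbq with hs2
    set u2 := q.dropUntil b hbq with hu2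
    have hspec2 : s2.append u2 = q := q.take_spec hbq
    have hlen2 : s2.length + u2.length = q.length := by
      rw [← hspec2, SimpleGraph.Walk.length_append]
    have hu0 : u2.length ≠ 0 := fun h0 =>
      hab.ne (SimpleGraph.Walk.eq_of_length_eq_zero h0).symm
    have hu1 : u2.length ≠ 1 := by
      intro h1
      have := length_one_edge u2 h1
      have h2 : s(b, a) ∈ q.edges := (SimpleGraph.Walk.edges_dropUntil_subset q hbq) this
      have h3 : s(b, a) ∈ p.edges := (SimpleGraph.Walk.edges_takeUntil_subset p ha) h2
      rw [Sym2.eq_swap] at h3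
      exact hne h3
    refine ⟨s2.append (SimpleGraph.Walk.cons hab.symm r), ?_, ?_⟩
    · rw [SimpleGraph.Walk.length_append, SimpleGraph.Walk.length_cons]
      omega
    · intro v hv
      rcases (SimpleGraph.Walk.mem_support_append_iff _ _).mp hv with h | h
      · exact (SimpleGraph.Walk.support_takeUntil_subset p ha)
          ((SimpleGraph.Walk.support_takeUntil_subset q hbq) h)
      · have h' : v ∈ b :: r.support := by simpa using h
        rcases List.mem_cons.mp h' with h | h
        · subst h; exact hb
        · exact (SimpleGraph.Walk.support_dropUntil_subset p ha) h
  · -- b occurs in r (after a): walk = q ++ cons hab (r.dropUntil b)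
    set t := r.dropUntil b hbr with ht
    set s3 := r.takeUntil b hbr with hs3
    have hspec3 : s3.append t = r := r.take_spec hbr
    have hlen3 : s3.length + t.length = r.length := by
      rw [← hspec3, SimpleGraph.Walk.length_append]
    have hs0 : s3.length ≠ 0 := fun h0 =>
      hab.ne (SimpleGraph.Walk.eq_of_length_eq_zero h0)
    have hs1 : s3.length ≠ 1 := by
      intro h1
      have := length_one_edge s3 h1
      have h2 : s(a, b) ∈ r.edges := (SimpleGraph.Walk.edges_takeUntil_subset r hbr) this
      exact hne ((SimpleGraph.Walk.edges_dropUntil_subset p ha) h2)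
    refine ⟨q.append (SimpleGraph.Walk.cons hab t), ?_, ?_⟩
    · rw [SimpleGraph.Walk.length_append, SimpleGraph.Walk.length_cons]
      omega
    · intro v hv
      rcases (SimpleGraph.Walk.mem_support_append_iff _ _).mp hv with h | h
      · exact (SimpleGraph.Walk.support_takeUntil_subset p ha) h
      · have : v ∈ a :: t.support := by simpa using h
        rcases List.mem_cons.mp this with h | h
        · subst h; exact ha
        · exact (SimpleGraph.Walk.support_dropUntil_subset p ha)
            ((SimpleGraph.Walk.support_dropUntil_subset r hbr) h)


lemma no_bichromatic_walk (G : SimpleGraph V) (c : V → ℕ)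
    (hc : ∀ u v : V, G.Adj u v → c u ≠ c v)
    (x y : V) (hep : EvenPair G x y) (i j : ℕ) (hij : i ≠ j)
    (hx : c x = i) (hy : c y = j) :
    ¬ ∃ p : G.Walk x y, ∀ v ∈ p.support, c v = i ∨ c v = j := by
  classical
  rintro ⟨p, hp⟩
  suffices H : ∀ n (p : G.Walk x y), p.length = n →
      (∀ v ∈ p.support, c v = i ∨ c v = j) → False from H p.length p rfl hp
  clear hp p
  intro n
  induction n using Nat.strong_induction_on with
  | _ n ih =>
  intro p hn hp
  subst hn
  by_cases hpath : p.IsPath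
  · by_cases hind : ∀ a b : V, a ∈ p.support → b ∈ p.support → G.Adj a b → s(a, b) ∈ p.edges
    · have heven : Even p.length := hep.2.2 p ⟨hpath, hind⟩
      have := (walk_alt G c hc i j p hp).mp heven
      rw [hx, hy] at this
      exact hij this
    · push_neg at hind
      obtain ⟨a, b, ha, hb, hab, hne⟩ := hind
      obtain ⟨w, hwlt, hwsup⟩ := shortcut p ha hb hab hne
      exact ih w.length hwlt w rfl (fun v hv => hp v (hwsup v hv))
  · have hlt : p.bypass.length < p.length := by
      rcases lt_or_eq_of_le p.length_bypass_le with h | h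
      · exact h
      · exact absurd (p.bypass_eq_self_of_length_le h.ge ▸ p.bypass_isPath) hpath
    exact ih p.bypass.length hlt p.bypass rfl
      (fun v hv => hp v (p.support_bypass_subset hv))

/-- Let `c` be a proper coloring of `G` and `{x, y}` an even pair with
`c x = i ≠ j = c y`.  Then `x` and `y` are in different components of the
subgraph induced by the vertices colored `i` or `j`, and swapping `i` and `j`
on the component of `x` gives a proper coloring (with the same colors) in
which `x` and `y` have the same color. -/
theorem evenPair_kempe_swap (G : SimpleGraph V) (c : V → ℕ)
    (hc : ∀ u v : V, G.Adj u v → c u ≠ c v)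
    (x y : V) (hep : EvenPair G x y) (i j : ℕ) (hij : i ≠ j)
    (hx : c x = i) (hy : c y = j) :
    (¬ ∃ p : G.Walk x y, ∀ v ∈ p.support, c v = i ∨ c v = j) ∧
    ∃ c' : V → ℕ,
      (∀ v : V,
        ((∃ p : G.Walk x v, ∀ u ∈ p.support, c u = i ∨ c u = j) →
          c' v = if c v = i then j else if c v = j then i else c v) ∧
        (¬ (∃ p : G.Walk x v, ∀ u ∈ p.support, c u = i ∨ c u = j) →
          c' v = c v)) ∧
      (∀ u v : V, G.Adj u v → c' u ≠ c' v) ∧ c' x = c' y := by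
  classical
  have hnw := no_bichromatic_walk G c hc x y hep i j hij hx hy
  have hreach_col : ∀ v, (∃ p : G.Walk x v, ∀ u ∈ p.support, c u = i ∨ c u = j) →
      c v = i ∨ c v = j := fun v ⟨p, hp⟩ => hp v p.end_mem_support
  have hreach_adj : ∀ u v, (∃ p : G.Walk x u, ∀ w ∈ p.support, c w = i ∨ c w = j) →
      G.Adj u v → (c v = i ∨ c v = j) →
      ∃ p : G.Walk x v, ∀ w ∈ p.support, c w = i ∨ c w = j := by
    rintro u v ⟨p, hp⟩ huv hv
    refine ⟨p.append (SimpleGraph.Walk.cons huv SimpleGraph.Walk.nil), ?_⟩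
    intro w hw
    rcases (SimpleGraph.Walk.mem_support_append_iff _ _).mp hw with h | h
    · exact hp w h
    · simp only [SimpleGraph.Walk.support_cons, SimpleGraph.Walk.support_nil] at h
      rcases List.mem_cons.mp h with h | h
      · subst h; exact hp w p.end_mem_support
      · simp only [List.mem_singleton] at h; subst h; exact hv
  set c' : V → ℕ := fun v =>
    if (∃ p : G.Walk x v, ∀ u ∈ p.support, c u = i ∨ c u = j) then
      (if c v = i then j else if c v = j then i else c v)
    else c v with hc'def
  have hpos : ∀ v, (∃ p : G.Walk x v, ∀ u ∈ p.support, c u = i ∨ c u = j) →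
      c' v = if c v = i then j else if c v = j then i else c v := by
    intro v h; simp only [hc'def]; rw [if_pos h]
  have hneg : ∀ v, ¬ (∃ p : G.Walk x v, ∀ u ∈ p.support, c u = i ∨ c u = j) →
      c' v = c v := by
    intro v h; simp only [hc'def]; rw [if_neg h]
  refine ⟨hnw, c', fun v => ⟨hpos v, hneg v⟩, ?_, ?_⟩
  · intro u v huv
    by_cases hu : ∃ p : G.Walk x u, ∀ w ∈ p.support, c w = i ∨ c w = j
    · by_cases hv : ∃ p : G.Walk x v, ∀ w ∈ p.support, c w = i ∨ c w = j
      · have h1 := hreach_col u hu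
        have h2 := hreach_col v hv
        have hne := hc u v huv
        rw [hpos u hu, hpos v hv]
        split_ifs <;> omega
      · have hcv : ¬ (c v = i ∨ c v = j) := fun h => hv (hreach_adj u v hu huv h)
        push_neg at hcv
        have h1 := hreach_col u hu
        rw [hpos u hu, hneg v hv]
        split_ifs <;> omega
    · by_cases hv : ∃ p : G.Walk x v, ∀ w ∈ p.support, c w = i ∨ c w = j
      · have hcu : ¬ (c u = i ∨ c u = j) := fun h => hu (hreach_adj v u hv huv.symm h)
        push_neg at hcu
        have h2 := hreach_col v hv
        rw [hneg u hu, hpos v hv]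
        split_ifs <;> omega
      · rw [hneg u hu, hneg v hv]
        exact hc u v huv
  · have hrx : ∃ p : G.Walk x x, ∀ u ∈ p.support, c u = i ∨ c u = j := by
      refine ⟨SimpleGraph.Walk.nil, ?_⟩
      intro u hu
      simp only [SimpleGraph.Walk.support_nil, List.mem_singleton] at hu
      subst hu; exact Or.inl hx
    rw [hpos x hrx, hneg y hnw, hx, hy, if_pos rfl]
end

section
/- Let G be a graph and let η = (A1,C1,B1,A2,C2,B2,A3,C3,B3) be a hyperprism in G. Suppose M is a set of vertices disjoint from the hyperprism such that for every connected subset F of V(G) \ (V(H) ∪ M), the set of attachments of F in H is contained in one of S1, S2, S3, A, or B (where H is the subgraph induced by the nine sets, Si = Ai ∪ Ci ∪ Bi, A = A1∪A2∪A3, B = B1∪B2∪B3). Then for each i ∈ {1,2,3}, the set M ∪ Ai ∪ Bi separates Ci from S_{i+1} ∪ S_{i+2} (indices mod 3) in G: there is no path from a vertex with a neighbor in Ci to a vertex with a neighbor in S_{i+1} ∪ S_{i+2} avoiding M ∪ Ai ∪ Bi ∪ V(H). -/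
variable {V : Type*}

/-- A set of vertices is connected in `G` if it is nonempty and any two of its
vertices are joined by a walk inside it. -/
def SetConnected (G : SimpleGraph V) (F : Set V) : Prop :=
  F.Nonempty ∧ ∀ x ∈ F, ∀ y ∈ F, ∃ p : G.Walk x y, ∀ v ∈ p.support, v ∈ F

/-- Hyperprism separation: if every connected subset of `G` outside `V(H) ∪ M`
has a local attachment set, then for each `i` the set `M ∪ A i ∪ B i` separates
`C i` from `S (i+1) ∪ S (i+2)`: no path avoiding `M ∪ A i ∪ B i ∪ V(H)` joins a
vertex with a neighbor in `C i` to a vertex with a neighbor in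
`S (i+1) ∪ S (i+2)`. -/
theorem hyperprism_cutsets (G : SimpleGraph V)
    (A' C' B' : Fin 3 → Set V) (M : Set V)
    -- abbreviations
    (S : Fin 3 → Set V) (hS : ∀ i, S i = A' i ∪ C' i ∪ B' i)
    (VH : Set V) (hVH : VH = ⋃ i : Fin 3, S i)
    (Abig Bbig : Set V) (hAbig : Abig = ⋃ i : Fin 3, A' i)
    (hBbig : Bbig = ⋃ i : Fin 3, B' i)
    -- hyperprism axioms
    (hne : ∀ i, (A' i).Nonempty ∧ (C' i).Nonempty ∧ (B' i).Nonempty)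
    (hdisj_in : ∀ i, Disjoint (A' i) (C' i) ∧ Disjoint (A' i) (B' i) ∧
        Disjoint (C' i) (B' i))
    (hdisj_strips : ∀ i j, i ≠ j → Disjoint (S i) (S j))
    (hcompA : ∀ i j, i ≠ j → ∀ a ∈ A' i, ∀ a' ∈ A' j, G.Adj a a')
    (hcompB : ∀ i j, i ≠ j → ∀ b ∈ B' i, ∀ b' ∈ B' j, G.Adj b b')
    (hnoother : ∀ i j, i ≠ j → ∀ u ∈ S i, ∀ v ∈ S j, G.Adj u v →
        (u ∈ A' i ∧ v ∈ A' j) ∨ (u ∈ B' i ∧ v ∈ B' j))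
    (hrung : ∀ i, ∀ v ∈ S i, ∃ (a : V) (b : V) (_ : a ∈ A' i) (_ : b ∈ B' i)
        (p : G.Walk a b), IsInducedPath G p ∧ v ∈ p.support ∧
        (∀ u ∈ p.support, u ∈ S i) ∧
        (∀ u ∈ p.support, u ≠ a → u ≠ b → u ∈ C' i))
    -- M is disjoint from the hyperprism
    (hM : Disjoint M VH)
    -- locality of attachments of connected sets outside V(H) ∪ M
    (hlocal : ∀ F : Set V, F ⊆ (VH ∪ M)ᶜ → SetConnected G F →
        ({v ∈ VH | ∃ u ∈ F, G.Adj u v} ⊆ S 0 ∨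
         {v ∈ VH | ∃ u ∈ F, G.Adj u v} ⊆ S 1 ∨
         {v ∈ VH | ∃ u ∈ F, G.Adj u v} ⊆ S 2 ∨
         {v ∈ VH | ∃ u ∈ F, G.Adj u v} ⊆ Abig ∨
         {v ∈ VH | ∃ u ∈ F, G.Adj u v} ⊆ Bbig)) :
    ∀ i : Fin 3, ¬ ∃ (x y : V) (p : G.Walk x y),
        (∀ v ∈ p.support, v ∉ M ∪ A' i ∪ B' i ∪ VH) ∧
        (∃ c ∈ C' i, G.Adj x c) ∧
        (∃ s ∈ S (i + 1) ∪ S (i + 2), G.Adj y s) := by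

  classical
  intro i
  rintro ⟨x, y, p, havoid, ⟨c, hc, hxc⟩, ⟨s, hs, hys⟩⟩
  set F : Set V := {v | v ∈ p.support} with hF
  have hFsub : F ⊆ (VH ∪ M)ᶜ := by
    intro v hv hmem
    have hav := havoid v hv
    rcases hmem with h | h
    · exact hav (Or.inr h)
    · exact hav (Or.inl (Or.inl (Or.inl h)))
  have hFconn : SetConnected G F := by
    refine ⟨⟨x, p.start_mem_support⟩, ?_⟩
    intro a ha b hb
    refine ⟨((p.takeUntil a ha).reverse.append (p.takeUntil b hb)), ?_⟩
    intro v hv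
    rw [SimpleGraph.Walk.mem_support_append_iff] at hv
    rcases hv with hv | hv
    · rw [SimpleGraph.Walk.support_reverse, List.mem_reverse] at hv
      exact p.support_takeUntil_subset ha hv
    · exact p.support_takeUntil_subset hb hv
  have hcS : c ∈ S i := by rw [hS]; exact Or.inl (Or.inr hc)
  have hcVH : c ∈ VH := by rw [hVH]; exact Set.mem_iUnion.mpr ⟨i, hcS⟩
  have hsVH : s ∈ VH := by
    rw [hVH]
    rcases hs with h | h
    · exact Set.mem_iUnion.mpr ⟨i + 1, h⟩
    · exact Set.mem_iUnion.mpr ⟨i + 2, h⟩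
  have hcatt : c ∈ {v ∈ VH | ∃ u ∈ F, G.Adj u v} :=
    ⟨hcVH, x, p.start_mem_support, hxc⟩
  have hsatt : s ∈ {v ∈ VH | ∃ u ∈ F, G.Adj u v} :=
    ⟨hsVH, y, p.end_mem_support, hys⟩
  have hfin : ∀ j : Fin 3, (j + 1 : Fin 3) ≠ j ∧ (j + 2 : Fin 3) ≠ j := by decide
  have hnotS : ∀ j : Fin 3, ¬ ({v ∈ VH | ∃ u ∈ F, G.Adj u v} ⊆ S j) := by
    intro j hsub
    by_cases hji : j = i
    · subst hji
      rcases hs with h | h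
      · exact Set.disjoint_left.mp (hdisj_strips (j + 1) j (hfin j).1) h (hsub hsatt)
      · exact Set.disjoint_left.mp (hdisj_strips (j + 2) j (hfin j).2) h (hsub hsatt)
    · exact Set.disjoint_left.mp (hdisj_strips j i hji) (hsub hcatt) hcS
  rcases hlocal F hFsub hFconn with h | h | h | h | h
  · exact hnotS 0 h
  · exact hnotS 1 h
  · exact hnotS 2 h
  · have hcA : c ∈ Abig := h hcatt
    rw [hAbig] at hcA
    obtain ⟨j, hj⟩ := Set.mem_iUnion.mp hcA
    by_cases hji : j = i
    · subst hji
      exact Set.disjoint_left.mp (hdisj_in j).1 hj hc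
    · have hjS : c ∈ S j := by rw [hS]; exact Or.inl (Or.inl hj)
      exact Set.disjoint_left.mp (hdisj_strips j i hji) hjS hcS
  · have hcB : c ∈ Bbig := h hcatt
    rw [hBbig] at hcB
    obtain ⟨j, hj⟩ := Set.mem_iUnion.mp hcB
    by_cases hji : j = i
    · subst hji
      exact Set.disjoint_left.mp (hdisj_in j).2.2 hc hj
    · have hjS : c ∈ S j := by rw [hS]; exact Or.inr hj
      exact Set.disjoint_left.mp (hdisj_strips j i hji) hjS hcS
end
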